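/- Let a ∈ ℝ, β, η, ν > 0, and let h : ℝ → ℝ be bounded and measurable. Suppose OPT(𝒫₃⁺) is consistent (there exists a feasible measure), and let Z* be its optimal value. Then either Z* is attained by some feasible P* ∈ 𝒫₃⁺, or there exists a sequence of feasible measures P⁽ᵏ⁾ = p₁⁽ᵏ⁾δ(x₁⁽ᵏ⁾) + p₂⁽ᵏ⁾δ(x₂⁽ᵏ⁾) + p₃⁽ᵏ⁾δ(x₃⁽ᵏ⁾) ∈ 𝒫₃⁺ with ν E_{P⁽ᵏ⁾}[H(X)] → Z* such that either (x₁⁽ᵏ⁾, x₂⁽ᵏ⁾, x₃⁽ᵏ⁾, p₁⁽ᵏ⁾, p₂⁽ᵏ⁾, p₃⁽ᵏ⁾) → (x₁*, x₂*, ∞, p₁*, p₂*, 0) for some x₁*, x₂* ∈ [0, ∞) (possibly equal) and p₁*, p₂* ≥ 0 with p₁* + p₂* = 1, or (x₁⁽ᵏ⁾, x₂⁽ᵏ⁾, x₃⁽ᵏ⁾, p₁⁽ᵏ⁾, p₂⁽ᵏ⁾, p₃⁽ᵏ⁾) → (x₁*, ∞, ∞, 1, 0, 0) for some x₁* ∈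 [0, ∞). -/

import Mathlib

open MeasureTheory Set Filter Topology

/-- `H(x) = ∫₀ˣ ∫₀ᵘ h(v + a) dv du`. -/
noncomputable def Hfun (a : ℝ) (h : ℝ → ℝ) (x : ℝ) : ℝ :=
  ∫ u in (0:ℝ)..x, (∫ v in (0:ℝ)..u, h (v + a))

/-- `P` is a Borel probability measure on `[0, ∞)` (modelled as a measure on `ℝ`
concentrated on `[0, ∞)`) with first moment `μ` and second moment `σ`. -/
def MomFeasible (μ σ : ℝ) (P : Measure ℝ) : Prop :=
  IsProbabilityMeasure P ∧ P (Set.Iio 0) = 0 ∧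
  Integrable (fun x => x) P ∧ Integrable (fun x => x ^ 2) P ∧
  (∫ x, x ∂P) = μ ∧ (∫ x, x ^ 2 ∂P) = σ

/-- The measure `P` is supported on at most `n` points. -/
def SuppAtMost (n : ℕ) (P : Measure ℝ) : Prop :=
  ∃ s : Finset ℝ, s.card ≤ n ∧ P ((s : Set ℝ)ᶜ) = 0

/-- The three-point measure `p₁ δ(x₁) + p₂ δ(x₂) + p₃ δ(x₃)`. -/
noncomputable def threePoint (x₁ x₂ x₃ p₁ p₂ p₃ : ℝ) : Measure ℝ :=
  ENNReal.ofReal p₁ • Measure.dirac x₁ + ENNReal.ofReal p₂ • Measure.dirac x₂ +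
    ENNReal.ofReal p₃ • Measure.dirac x₃

lemma integrable_smul_dirac (f : ℝ → ℝ) (p : ℝ) (x : ℝ) :
    Integrable f (ENNReal.ofReal p • Measure.dirac x) := by
  have hfin : IsFiniteMeasure (ENNReal.ofReal p • Measure.dirac x) := by
    constructor
    simp [Measure.smul_apply, ENNReal.ofReal_lt_top, ENNReal.mul_lt_top]
  have hae : f =ᵐ[ENNReal.ofReal p • Measure.dirac x] fun _ => f x := by
    have h1 : f =ᵐ[Measure.dirac x] fun _ => f x := by
      rw [ae_dirac_eq]; exact Filter.eventually_pure.mpr rfl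
    exact Measure.ae_smul_measure h1 _
  exact (integrable_const (f x)).congr hae.symm

lemma integrable_threePoint (f : ℝ → ℝ) {x₁ x₂ x₃ p₁ p₂ p₃ : ℝ} :
    Integrable f (threePoint x₁ x₂ x₃ p₁ p₂ p₃) :=
  ((integrable_smul_dirac f p₁ x₁).add_measure (integrable_smul_dirac f p₂ x₂)).add_measure
    (integrable_smul_dirac f p₃ x₃)

lemma integral_smul_dirac (f : ℝ → ℝ) {p : ℝ} (hp : 0 ≤ p) (x : ℝ) :
    ∫ y, f y ∂(ENNReal.ofReal p • Measure.dirac x) = p * f x := by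
  rw [integral_smul_measure, integral_dirac, ENNReal.toReal_ofReal hp, smul_eq_mul]

lemma integral_threePoint (f : ℝ → ℝ) {x₁ x₂ x₃ p₁ p₂ p₃ : ℝ}
    (h₁ : 0 ≤ p₁) (h₂ : 0 ≤ p₂) (h₃ : 0 ≤ p₃) :
    ∫ y, f y ∂(threePoint x₁ x₂ x₃ p₁ p₂ p₃) = p₁ * f x₁ + p₂ * f x₂ + p₃ * f x₃ := by
  rw [threePoint, integral_add_measure ((integrable_smul_dirac f p₁ x₁).add_measure
      (integrable_smul_dirac f p₂ x₂)) (integrable_smul_dirac f p₃ x₃),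
    integral_add_measure (integrable_smul_dirac f p₁ x₁) (integrable_smul_dirac f p₂ x₂),
    integral_smul_dirac f h₁, integral_smul_dirac f h₂, integral_smul_dirac f h₃]

lemma threePoint_apply (x₁ x₂ x₃ p₁ p₂ p₃ : ℝ) (A : Set ℝ) :
    threePoint x₁ x₂ x₃ p₁ p₂ p₃ A =
      ENNReal.ofReal p₁ * A.indicator 1 x₁ + ENNReal.ofReal p₂ * A.indicator 1 x₂ +
        ENNReal.ofReal p₃ * A.indicator 1 x₃ := by
  simp [threePoint, Measure.add_apply, Measure.smul_apply, Measure.dirac_apply, smul_eq_mul]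

lemma pad_finset : ∀ (n : ℕ) (s : Finset ℝ), (∀ y ∈ s, 0 ≤ y) → s.card ≤ n →
    ∃ t : Finset ℝ, s ⊆ t ∧ t.card = n ∧ ∀ y ∈ t, 0 ≤ y := by
  intro n
  induction n with
  | zero => exact fun s h hc => ⟨s, subset_rfl, Nat.le_zero.mp hc, h⟩
  | succ n ih =>
    intro s h hc
    rcases eq_or_lt_of_le hc with heq | hlt
    · exact ⟨s, subset_rfl, heq, h⟩
    · obtain ⟨t, hst, htc, ht0⟩ := ih s h (Nat.lt_succ_iff.mp hlt)
      obtain ⟨b, hb0, hbt⟩ := (Set.Ici_infinite (0:ℝ)).exists_notMem_finset t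
      refine ⟨insert b t, hst.trans (Finset.subset_insert _ _),
        by rw [Finset.card_insert_of_notMem hbt, htc], ?_⟩
      intro y hy
      rcases Finset.mem_insert.mp hy with rfl | hy
      · exact hb0
      · exact ht0 y hy

lemma exists_threePoint_rep {P : Measure ℝ} (hprob : IsProbabilityMeasure P)
    (hneg : P (Set.Iio 0) = 0) (hs : ∃ s : Finset ℝ, s.card ≤ 3 ∧ P ((s : Set ℝ)ᶜ) = 0) :
    ∃ x₁ x₂ x₃ p₁ p₂ p₃ : ℝ, 0 ≤ x₁ ∧ 0 ≤ x₂ ∧ 0 ≤ x₃ ∧ 0 ≤ p₁ ∧ 0 ≤ p₂ ∧ 0 ≤ p₃ ∧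
      p₁ + p₂ + p₃ = 1 ∧ P = threePoint x₁ x₂ x₃ p₁ p₂ p₃ := by
  obtain ⟨s, hcard, hsc⟩ := hs
  set s₀ := s.filter (fun y => 0 ≤ y) with hs₀
  have hs₀sub : (↑s₀ : Set ℝ)ᶜ ⊆ (↑s : Set ℝ)ᶜ ∪ Set.Iio 0 := by
    intro y hy
    by_cases hys : y ∈ s
    · right
      simp only [Set.mem_compl_iff, Finset.coe_filter, Set.mem_setOf_eq, not_and, hs₀] at hy
      exact lt_of_not_ge (hy hys)
    · exact Or.inl hys
  have hs₀c : P ((↑s₀ : Set ℝ)ᶜ) = 0 :=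
    measure_mono_null hs₀sub (measure_union_null hsc hneg)
  have hs₀card : s₀.card ≤ 3 := le_trans (Finset.card_filter_le _ _) hcard
  have hs₀0 : ∀ y ∈ s₀, 0 ≤ y := fun y hy => (Finset.mem_filter.mp hy).2
  obtain ⟨t, hst, htc, ht0⟩ := pad_finset 3 s₀ hs₀0 hs₀card
  have htc' : P ((↑t : Set ℝ)ᶜ) = 0 :=
    measure_mono_null (Set.compl_subset_compl.mpr (by exact_mod_cast hst)) hs₀c
  obtain ⟨y₁, y₂, y₃, h12, h13, h23, rfl⟩ := Finset.card_eq_three.mp htc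
  have hy₁ : (0:ℝ) ≤ y₁ := ht0 y₁ (by simp)
  have hy₂ : (0:ℝ) ≤ y₂ := ht0 y₂ (by simp)
  have hy₃ : (0:ℝ) ≤ y₃ := ht0 y₃ (by simp)
  set p₁ := (P {y₁}).toReal
  set p₂ := (P {y₂}).toReal
  set p₃ := (P {y₃}).toReal
  have hfin : ∀ y : ℝ, P {y} ≠ ⊤ := fun y => measure_ne_top P _
  have hrep : P = threePoint y₁ y₂ y₃ p₁ p₂ p₃ := by
    ext A hA
    rw [threePoint_apply]
    have hoR : ∀ y : ℝ, ENNReal.ofReal (P {y}).toReal = P {y} :=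
      fun y => ENNReal.ofReal_toReal (hfin y)
    rw [hoR y₁, hoR y₂, hoR y₃]
    have hsingle : ∀ y : ℝ, P (A ∩ {y}) = P {y} * A.indicator 1 y := by
      intro y
      by_cases hyA : y ∈ A
      · rw [Set.inter_eq_self_of_subset_right (Set.singleton_subset_iff.mpr hyA),
          Set.indicator_of_mem hyA, Pi.one_apply, mul_one]
      · rw [Set.inter_singleton_eq_empty.mpr hyA,
          Set.indicator_of_notMem hyA, mul_zero, measure_empty]
    have hts : (↑({y₁, y₂, y₃} : Finset ℝ) : Set ℝ) = {y₁} ∪ ({y₂} ∪ {y₃}) := by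
      rw [Finset.coe_insert, Finset.coe_insert, Finset.coe_singleton, Set.insert_eq, Set.insert_eq]
    have hAsplit : A ∩ (↑({y₁, y₂, y₃} : Finset ℝ) : Set ℝ) =
        (A ∩ {y₁}) ∪ ((A ∩ {y₂}) ∪ (A ∩ {y₃})) := by
      rw [hts, Set.inter_union_distrib_left, Set.inter_union_distrib_left]
    have hdiff : P (A \ ↑({y₁, y₂, y₃} : Finset ℝ)) = 0 :=
      measure_mono_null (Set.diff_subset_iff.mpr (by simp)) htc'
    have hsplit := measure_inter_add_diff (μ := P) A
      (Finset.measurableSet ({y₁, y₂, y₃} : Finset ℝ) : MeasurableSet _)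
    rw [hdiff, add_zero] at hsplit
    rw [← hsplit, hAsplit]
    have hd1 : Disjoint (A ∩ {y₁}) ((A ∩ {y₂}) ∪ (A ∩ {y₃})) := by
      apply Set.disjoint_union_right.mpr
      constructor
      · exact Set.disjoint_of_subset Set.inter_subset_right Set.inter_subset_right
          (Set.disjoint_singleton.mpr h12)
      · exact Set.disjoint_of_subset Set.inter_subset_right Set.inter_subset_right
          (Set.disjoint_singleton.mpr h13)
    have hd2 : Disjoint (A ∩ {y₂}) (A ∩ {y₃}) :=
      Set.disjoint_of_subset Set.inter_subset_right Set.inter_subset_right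
        (Set.disjoint_singleton.mpr h23)
    rw [measure_union hd1 ((hA.inter (measurableSet_singleton y₂)).union
        (hA.inter (measurableSet_singleton y₃))),
      measure_union hd2 (hA.inter (measurableSet_singleton y₃)),
      hsingle y₁, hsingle y₂, hsingle y₃, add_assoc]
  refine ⟨y₁, y₂, y₃, p₁, p₂, p₃, hy₁, hy₂, hy₃, ENNReal.toReal_nonneg,
    ENNReal.toReal_nonneg, ENNReal.toReal_nonneg, ?_, hrep⟩
  have huniv := measure_univ (μ := P)
  rw [hrep, threePoint_apply] at huniv
  simp only [Set.indicator_univ, Pi.one_apply, mul_one] at huniv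
  rw [← ENNReal.ofReal_add ENNReal.toReal_nonneg ENNReal.toReal_nonneg,
    ← ENNReal.ofReal_add (by positivity) ENNReal.toReal_nonneg] at huniv
  have := ENNReal.ofReal_eq_one.mp huniv
  linarith [this]

section Hprops
variable {a : ℝ} {h : ℝ → ℝ} {M : ℝ}

lemma inner_intInt (hmeas : Measurable h) (hbd : ∀ x, |h x| ≤ M) :
    ∀ c d : ℝ, IntervalIntegrable (fun v => h (v + a)) volume c d := by
  intro c d
  exact (intervalIntegrable_const (c := M)).mono_fun'
    ((hmeas.comp (measurable_id.add_const a)).aestronglyMeasurable)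
    (Filter.Eventually.of_forall fun x => by simpa using hbd (x + a))

lemma inner_cont (hmeas : Measurable h) (hbd : ∀ x, |h x| ≤ M) :
    Continuous fun u => ∫ v in (0:ℝ)..u, h (v + a) :=
  intervalIntegral.continuous_primitive (inner_intInt hmeas hbd) 0

lemma inner_bound (hmeas : Measurable h) (hbd : ∀ x, |h x| ≤ M) (u : ℝ) :
    |∫ v in (0:ℝ)..u, h (v + a)| ≤ M * |u| := by
  have := intervalIntegral.norm_integral_le_of_norm_le_const
    (a := 0) (b := u) (C := M) (f := fun v => h (v + a))
    (fun x _ => by simpa using hbd (x + a))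
  simpa using this

lemma Hfun_continuous (hmeas : Measurable h) (hbd : ∀ x, |h x| ≤ M) :
    Continuous (Hfun a h) := by
  apply intervalIntegral.continuous_primitive
    (fun c d => ((inner_cont hmeas hbd)).intervalIntegrable c d) 0

lemma Hfun_bound (hmeas : Measurable h) (hbd : ∀ x, |h x| ≤ M) (x : ℝ) :
    |Hfun a h x| ≤ M * x ^ 2 := by
  have key : ∀ u ∈ Set.uIoc (0:ℝ) x, ‖∫ v in (0:ℝ)..u, h (v + a)‖ ≤ M * |x| := by
    intro u hu
    have hux : |u| ≤ |x| := by
      rcases Set.mem_uIoc.mp hu with ⟨h1, h2⟩ | ⟨h1, h2⟩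
      · rw [abs_of_pos h1, abs_of_nonneg (le_trans h1.le h2)]; exact h2
      · rw [abs_of_nonpos h2, abs_of_neg (lt_of_lt_of_le h1 h2)]; linarith
    calc ‖∫ v in (0:ℝ)..u, h (v + a)‖ ≤ M * |u| := inner_bound hmeas hbd u
      _ ≤ M * |x| := by
        have hM : 0 ≤ M := le_trans (abs_nonneg _) (hbd 0)
        exact mul_le_mul_of_nonneg_left hux hM
  have := intervalIntegral.norm_integral_le_of_norm_le_const key
  rw [Hfun]
  calc |∫ u in (0:ℝ)..x, ∫ v in (0:ℝ)..u, h (v + a)| ≤ M * |x| * |x - 0| := this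
    _ = M * x ^ 2 := by rw [sub_zero, mul_assoc, abs_mul_abs_self, ← sq]

end Hprops

lemma exists_subseq_dichotomy (u : ℕ → ℝ) (hu : ∀ k, 0 ≤ u k) :
    ∃ φ : ℕ → ℕ, StrictMono φ ∧
      ((∃ l : ℝ, 0 ≤ l ∧ Tendsto (u ∘ φ) atTop (𝓝 l)) ∨ Tendsto (u ∘ φ) atTop atTop) := by
  obtain ⟨L, -, φ, hφ, hconv⟩ := isCompact_univ.tendsto_subseq
    (x := fun k => ENNReal.ofReal (u k)) (fun n => Set.mem_univ _)
  refine ⟨φ, hφ, ?_⟩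
  rcases eq_or_ne L ⊤ with rfl | hL
  · right
    rw [tendsto_atTop]
    intro b
    have hb : ENNReal.ofReal b < ⊤ := ENNReal.ofReal_lt_top
    have := hconv.eventually (lt_mem_nhds hb)
    filter_upwards [this] with k hk
    simp only [Function.comp_apply] at hk ⊢
    by_contra hc
    push_neg at hc
    exact absurd (ENNReal.ofReal_le_ofReal hc.le) (not_le.mpr hk)
  · left
    refine ⟨L.toReal, ENNReal.toReal_nonneg, ?_⟩
    have h2 := (ENNReal.tendsto_toReal hL).comp hconv
    have : (fun k => (ENNReal.ofReal (u (φ k))).toReal) = u ∘ φ := by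
      funext k; exact ENNReal.toReal_ofReal (hu (φ k))
    rwa [show ENNReal.toReal ∘ (fun k => ENNReal.ofReal (u k)) ∘ φ
        = (fun k => (ENNReal.ofReal (u (φ k))).toReal) from rfl, this] at h2

lemma threePoint_perm₁ (x₁ x₂ x₃ p₁ p₂ p₃ : ℝ) :
    threePoint x₁ x₂ x₃ p₁ p₂ p₃ = threePoint x₂ x₁ x₃ p₂ p₁ p₃ := by
  rw [threePoint, threePoint, add_comm (ENNReal.ofReal p₁ • Measure.dirac x₁)]

lemma threePoint_perm₂ (x₁ x₂ x₃ p₁ p₂ p₃ : ℝ) :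
    threePoint x₁ x₂ x₃ p₁ p₂ p₃ = threePoint x₁ x₃ x₂ p₁ p₃ p₂ := by
  rw [threePoint, threePoint, add_assoc, add_assoc,
    add_comm (ENNReal.ofReal p₂ • Measure.dirac x₂)]

lemma threePoint_rot (x₁ x₂ x₃ p₁ p₂ p₃ : ℝ) :
    threePoint x₁ x₂ x₃ p₁ p₂ p₃ = threePoint x₂ x₃ x₁ p₂ p₃ p₁ := by
  rw [threePoint, threePoint, add_assoc, add_comm (ENNReal.ofReal p₁ • Measure.dirac x₁)]

lemma momFeasible_threePoint {μ σ x₁ x₂ x₃ p₁ p₂ p₃ : ℝ}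
    (hx₁ : 0 ≤ x₁) (hx₂ : 0 ≤ x₂) (hx₃ : 0 ≤ x₃)
    (hp₁ : 0 ≤ p₁) (hp₂ : 0 ≤ p₂) (hp₃ : 0 ≤ p₃) (hsum : p₁ + p₂ + p₃ = 1)
    (hm : p₁ * x₁ + p₂ * x₂ + p₃ * x₃ = μ)
    (hv : p₁ * x₁ ^ 2 + p₂ * x₂ ^ 2 + p₃ * x₃ ^ 2 = σ) :
    MomFeasible μ σ (threePoint x₁ x₂ x₃ p₁ p₂ p₃) := by
  refine ⟨⟨?_⟩, ?_, integrable_threePoint _, integrable_threePoint _, ?_, ?_⟩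
  · rw [threePoint_apply]
    simp only [Set.indicator_univ, Pi.one_apply, mul_one]
    rw [← ENNReal.ofReal_add hp₁ hp₂, ← ENNReal.ofReal_add (add_nonneg hp₁ hp₂) hp₃,
      hsum, ENNReal.ofReal_one]
  · rw [threePoint_apply]
    rw [Set.indicator_of_notMem (by simpa using not_lt.mpr hx₁),
      Set.indicator_of_notMem (by simpa using not_lt.mpr hx₂),
      Set.indicator_of_notMem (by simpa using not_lt.mpr hx₃)]
    simp
  · rw [integral_threePoint (fun x => x) hp₁ hp₂ hp₃]; exact hm
  · rw [integral_threePoint (fun x => x ^ 2) hp₁ hp₂ hp₃]; exact hv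

lemma suppAtMost_threePoint (x₁ x₂ x₃ p₁ p₂ p₃ : ℝ) :
    SuppAtMost 3 (threePoint x₁ x₂ x₃ p₁ p₂ p₃) := by
  refine ⟨{x₁, x₂, x₃}, ?_, ?_⟩
  · apply le_trans (Finset.card_insert_le _ _)
    apply Nat.succ_le_succ
    apply le_trans (Finset.card_insert_le _ _)
    simp
  · rw [threePoint_apply]
    rw [Set.indicator_of_notMem (by simp), Set.indicator_of_notMem (by simp),
      Set.indicator_of_notMem (by simp)]
    simp

def Pack (μ σ : ℝ) (x₁ x₂ x₃ p₁ p₂ p₃ : ℕ → ℝ) : Prop :=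
  ∀ k, 0 ≤ x₁ k ∧ 0 ≤ x₂ k ∧ 0 ≤ x₃ k ∧ 0 ≤ p₁ k ∧ 0 ≤ p₂ k ∧ 0 ≤ p₃ k ∧
    p₁ k + p₂ k + p₃ k = 1 ∧
    MomFeasible μ σ (threePoint (x₁ k) (x₂ k) (x₃ k) (p₁ k) (p₂ k) (p₃ k))

lemma Pack.swap12 {μ σ : ℝ} {x₁ x₂ x₃ p₁ p₂ p₃ : ℕ → ℝ}
    (hp : Pack μ σ x₁ x₂ x₃ p₁ p₂ p₃) : Pack μ σ x₂ x₁ x₃ p₂ p₁ p₃ := by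
  intro k
  obtain ⟨h1, h2, h3, h4, h5, h6, h7, h8⟩ := hp k
  exact ⟨h2, h1, h3, h5, h4, h6, by linarith, by rwa [← threePoint_perm₁]⟩

lemma Pack.swap23 {μ σ : ℝ} {x₁ x₂ x₃ p₁ p₂ p₃ : ℕ → ℝ}
    (hp : Pack μ σ x₁ x₂ x₃ p₁ p₂ p₃) : Pack μ σ x₁ x₃ x₂ p₁ p₃ p₂ := by
  intro k
  obtain ⟨h1, h2, h3, h4, h5, h6, h7, h8⟩ := hp k
  exact ⟨h1, h3, h2, h4, h6, h5, by linarith, by rwa [← threePoint_perm₂]⟩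

lemma Pack.rot {μ σ : ℝ} {x₁ x₂ x₃ p₁ p₂ p₃ : ℕ → ℝ}
    (hp : Pack μ σ x₁ x₂ x₃ p₁ p₂ p₃) : Pack μ σ x₂ x₃ x₁ p₂ p₃ p₁ := by
  intro k
  obtain ⟨h1, h2, h3, h4, h5, h6, h7, h8⟩ := hp k
  exact ⟨h2, h3, h1, h5, h6, h4, by linarith, by rwa [← threePoint_rot]⟩

lemma tendsto_p_zero {x p : ℕ → ℝ} {σ : ℝ} (hp : ∀ k, 0 ≤ p k)
    (hb : ∀ k, p k * (x k) ^ 2 ≤ σ) (hx : Tendsto x atTop atTop) :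
    Tendsto p atTop (𝓝 0) := by
  have hx2 : Tendsto (fun k => (x k) ^ 2) atTop atTop := by
    have := hx.atTop_mul_atTop₀ hx
    refine this.congr fun k => ?_
    rw [sq]
  have hdiv : Tendsto (fun k => σ / (x k) ^ 2) atTop (𝓝 0) :=
    tendsto_const_nhds.div_atTop hx2
  have hub : ∀ᶠ k in atTop, p k ≤ σ / (x k) ^ 2 := by
    filter_upwards [hx.eventually_gt_atTop 0] with k hk
    rw [le_div_iff₀ (by positivity)]
    exact hb k
  exact tendsto_of_tendsto_of_tendsto_of_le_of_le' tendsto_const_nhds hdiv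
    (Filter.Eventually.of_forall hp) hub

lemma Pack.mass_bound {μ σ : ℝ} {x₁ x₂ x₃ p₁ p₂ p₃ : ℕ → ℝ}
    (hp : Pack μ σ x₁ x₂ x₃ p₁ p₂ p₃) (k : ℕ) :
    p₁ k * x₁ k ^ 2 + p₂ k * x₂ k ^ 2 + p₃ k * x₃ k ^ 2 = σ := by
  obtain ⟨h1, h2, h3, h4, h5, h6, h7, h8⟩ := hp k
  have := h8.2.2.2.2.2
  rwa [integral_threePoint (fun x => x ^ 2) h4 h5 h6] at this

lemma Pack.p3_zero {μ σ : ℝ} {x₁ x₂ x₃ p₁ p₂ p₃ : ℕ → ℝ}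
    (hp : Pack μ σ x₁ x₂ x₃ p₁ p₂ p₃) (hx₃ : Tendsto x₃ atTop atTop) :
    Tendsto p₃ atTop (𝓝 0) := by
  refine tendsto_p_zero (σ := σ) (fun k => (hp k).2.2.2.2.2.1) (fun k => ?_) hx₃
  obtain ⟨h1, h2, h3, h4, h5, h6, h7, h8⟩ := hp k
  have hs := hp.mass_bound k
  nlinarith [mul_nonneg h4 (sq_nonneg (x₁ k)), mul_nonneg h5 (sq_nonneg (x₂ k))]

lemma Pack.first_moment {μ σ : ℝ} {x₁ x₂ x₃ p₁ p₂ p₃ : ℕ → ℝ}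
    (hp : Pack μ σ x₁ x₂ x₃ p₁ p₂ p₃) (k : ℕ) :
    p₁ k * x₁ k + p₂ k * x₂ k + p₃ k * x₃ k = μ := by
  obtain ⟨h1, h2, h3, h4, h5, h6, h7, h8⟩ := hp k
  have := h8.2.2.2.2.1
  rwa [integral_threePoint (fun x => x) h4 h5 h6] at this

def RHS (a ν Zstar μ σ : ℝ) (h : ℝ → ℝ) : Prop :=
  ∃ x₁ x₂ x₃ p₁ p₂ p₃ : ℕ → ℝ,
    (∀ k, 0 ≤ x₁ k ∧ 0 ≤ x₂ k ∧ 0 ≤ x₃ k ∧ 0 ≤ p₁ k ∧ 0 ≤ p₂ k ∧ 0 ≤ p₃ k ∧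
      p₁ k + p₂ k + p₃ k = 1 ∧
      MomFeasible μ σ (threePoint (x₁ k) (x₂ k) (x₃ k) (p₁ k) (p₂ k) (p₃ k))) ∧
    Tendsto (fun k =>
        ν * ∫ x, Hfun a h x ∂(threePoint (x₁ k) (x₂ k) (x₃ k) (p₁ k) (p₂ k) (p₃ k)))
      atTop (𝓝 Zstar) ∧
    ((∃ x₁s x₂s p₁s p₂s : ℝ, 0 ≤ x₁s ∧ 0 ≤ x₂s ∧ 0 ≤ p₁s ∧ 0 ≤ p₂s ∧ p₁s + p₂s = 1 ∧
        Tendsto x₁ atTop (𝓝 x₁s) ∧ Tendsto x₂ atTop (𝓝 x₂s) ∧ Tendsto x₃ atTop atTop ∧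
        Tendsto p₁ atTop (𝓝 p₁s) ∧ Tendsto p₂ atTop (𝓝 p₂s) ∧
        Tendsto p₃ atTop (𝓝 0)) ∨
      (∃ x₁s : ℝ, 0 ≤ x₁s ∧
        Tendsto x₁ atTop (𝓝 x₁s) ∧ Tendsto x₂ atTop atTop ∧ Tendsto x₃ atTop atTop ∧
        Tendsto p₁ atTop (𝓝 1) ∧ Tendsto p₂ atTop (𝓝 0) ∧
        Tendsto p₃ atTop (𝓝 0)))

lemma branch1_helper {a ν Zstar μ σ : ℝ} {h : ℝ → ℝ}
    {x₁ x₂ x₃ p₁ p₂ p₃ : ℕ → ℝ} {l₁ l₂ q₁ q₂ : ℝ}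
    (hpack : Pack μ σ x₁ x₂ x₃ p₁ p₂ p₃)
    (hobj : Tendsto (fun k => ν * (p₁ k * Hfun a h (x₁ k) + p₂ k * Hfun a h (x₂ k) +
      p₃ k * Hfun a h (x₃ k))) atTop (𝓝 Zstar))
    (hl₁ : 0 ≤ l₁) (hl₂ : 0 ≤ l₂) (hq₁ : 0 ≤ q₁) (hq₂ : 0 ≤ q₂)
    (hx₁ : Tendsto x₁ atTop (𝓝 l₁)) (hx₂ : Tendsto x₂ atTop (𝓝 l₂))
    (hx₃ : Tendsto x₃ atTop atTop)
    (hp₁ : Tendsto p₁ atTop (𝓝 q₁)) (hp₂ : Tendsto p₂ atTop (𝓝 q₂)) :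
    RHS a ν Zstar μ σ h := by
  have hp₃ : Tendsto p₃ atTop (𝓝 0) := hpack.p3_zero hx₃
  have hq12 : q₁ + q₂ = 1 := by
    have h1 : Tendsto (fun k => p₁ k + p₂ k + p₃ k) atTop (𝓝 (q₁ + q₂ + 0)) :=
      (hp₁.add hp₂).add hp₃
    have h2 : Tendsto (fun k => p₁ k + p₂ k + p₃ k) atTop (𝓝 1) :=
      Tendsto.congr (fun k => ((hpack k).2.2.2.2.2.2.1).symm) tendsto_const_nhds
    have := tendsto_nhds_unique h1 h2
    linarith
  refine ⟨x₁, x₂, x₃, p₁, p₂, p₃, hpack, ?_,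
    Or.inl ⟨l₁, l₂, q₁, q₂, hl₁, hl₂, hq₁, hq₂, hq12, hx₁, hx₂, hx₃, hp₁, hp₂, hp₃⟩⟩
  refine hobj.congr fun k => ?_
  obtain ⟨-, -, -, h4, h5, h6, -, -⟩ := hpack k
  rw [integral_threePoint (Hfun a h) h4 h5 h6]

lemma branch2_helper {a ν Zstar μ σ : ℝ} {h : ℝ → ℝ}
    {x₁ x₂ x₃ p₁ p₂ p₃ : ℕ → ℝ} {l₁ : ℝ}
    (hpack : Pack μ σ x₁ x₂ x₃ p₁ p₂ p₃)
    (hobj : Tendsto (fun k => ν * (p₁ k * Hfun a h (x₁ k) + p₂ k * Hfun a h (x₂ k) +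
      p₃ k * Hfun a h (x₃ k))) atTop (𝓝 Zstar))
    (hl₁ : 0 ≤ l₁) (hx₁ : Tendsto x₁ atTop (𝓝 l₁))
    (hx₂ : Tendsto x₂ atTop atTop) (hx₃ : Tendsto x₃ atTop atTop) :
    RHS a ν Zstar μ σ h := by
  have hp₃ : Tendsto p₃ atTop (𝓝 0) := hpack.p3_zero hx₃
  have hp₂ : Tendsto p₂ atTop (𝓝 0) := hpack.swap23.p3_zero hx₂
  have hp₁ : Tendsto p₁ atTop (𝓝 1) := by
    have h1 : Tendsto (fun k => 1 - p₂ k - p₃ k) atTop (𝓝 (1 - 0 - 0)) :=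
      (tendsto_const_nhds.sub hp₂).sub hp₃
    refine Tendsto.congr (fun k => ?_) (by simpa using h1)
    have := (hpack k).2.2.2.2.2.2.1
    linarith
  refine ⟨x₁, x₂, x₃, p₁, p₂, p₃, hpack, ?_,
    Or.inr ⟨l₁, hl₁, hx₁, hx₂, hx₃, hp₁, hp₂, hp₃⟩⟩
  refine hobj.congr fun k => ?_
  obtain ⟨-, -, -, h4, h5, h6, -, -⟩ := hpack k
  rw [integral_threePoint (Hfun a h) h4 h5 h6]

lemma attained_helper {a ν Zstar μ σ M : ℝ} {h : ℝ → ℝ}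
    (hmeas : Measurable h) (hbd : ∀ x, |h x| ≤ M)
    {x₁ x₂ x₃ p₁ p₂ p₃ : ℕ → ℝ} {l₁ l₂ l₃ q₁ q₂ q₃ : ℝ}
    (hpack : Pack μ σ x₁ x₂ x₃ p₁ p₂ p₃)
    (hobj : Tendsto (fun k => ν * (p₁ k * Hfun a h (x₁ k) + p₂ k * Hfun a h (x₂ k) +
      p₃ k * Hfun a h (x₃ k))) atTop (𝓝 Zstar))
    (hl₁ : 0 ≤ l₁) (hl₂ : 0 ≤ l₂) (hl₃ : 0 ≤ l₃)
    (hq₁ : 0 ≤ q₁) (hq₂ : 0 ≤ q₂) (hq₃ : 0 ≤ q₃)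
    (hx₁ : Tendsto x₁ atTop (𝓝 l₁)) (hx₂ : Tendsto x₂ atTop (𝓝 l₂))
    (hx₃ : Tendsto x₃ atTop (𝓝 l₃))
    (hp₁ : Tendsto p₁ atTop (𝓝 q₁)) (hp₂ : Tendsto p₂ atTop (𝓝 q₂))
    (hp₃ : Tendsto p₃ atTop (𝓝 q₃)) :
    ∃ P : Measure ℝ, MomFeasible μ σ P ∧ SuppAtMost 3 P ∧
      ν * ∫ x, Hfun a h x ∂P = Zstar := by
  have hsum : q₁ + q₂ + q₃ = 1 :=
    tendsto_nhds_unique ((hp₁.add hp₂).add hp₃)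
      (Tendsto.congr (fun k => ((hpack k).2.2.2.2.2.2.1).symm) tendsto_const_nhds)
  have hm : q₁ * l₁ + q₂ * l₂ + q₃ * l₃ = μ :=
    tendsto_nhds_unique (((hp₁.mul hx₁).add (hp₂.mul hx₂)).add (hp₃.mul hx₃))
      (Tendsto.congr (fun k => (hpack.first_moment k).symm) tendsto_const_nhds)
  have hv : q₁ * l₁ ^ 2 + q₂ * l₂ ^ 2 + q₃ * l₃ ^ 2 = σ :=
    tendsto_nhds_unique (((hp₁.mul (hx₁.pow 2)).add (hp₂.mul (hx₂.pow 2))).add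
        (hp₃.mul (hx₃.pow 2)))
      (Tendsto.congr (fun k => (hpack.mass_bound k).symm) tendsto_const_nhds)
  refine ⟨threePoint l₁ l₂ l₃ q₁ q₂ q₃,
    momFeasible_threePoint hl₁ hl₂ hl₃ hq₁ hq₂ hq₃ hsum hm hv,
    suppAtMost_threePoint _ _ _ _ _ _, ?_⟩
  rw [integral_threePoint (Hfun a h) hq₁ hq₂ hq₃]
  have hHc : Continuous (Hfun a h) := Hfun_continuous hmeas hbd
  have hlim : Tendsto (fun k => ν * (p₁ k * Hfun a h (x₁ k) + p₂ k * Hfun a h (x₂ k) +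
      p₃ k * Hfun a h (x₃ k))) atTop
      (𝓝 (ν * (q₁ * Hfun a h l₁ + q₂ * Hfun a h l₂ + q₃ * Hfun a h l₃))) := by
    apply Tendsto.const_mul
    exact ((hp₁.mul ((hHc.tendsto l₁).comp hx₁)).add
      (hp₂.mul ((hHc.tendsto l₂).comp hx₂))).add (hp₃.mul ((hHc.tendsto l₃).comp hx₃))
  exact tendsto_nhds_unique hlim hobj

/-- Proposition 1 (optimality characterization of `OPT(𝒫₃⁺)`). -/
theorem OPT3_characterization
    (a β η ν : ℝ) (hβ : 0 < β) (hη : 0 < η) (hν : 0 < ν)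
    (h : ℝ → ℝ) (hmeas : Measurable h) (hbd : ∃ M, ∀ x, |h x| ≤ M)
    (μ σ : ℝ) (hμ : μ = η / ν) (hσ : σ = 2 * β / ν)
    (Zstar : ℝ)
    (hZ : Zstar = sSup {z : ℝ | ∃ P : Measure ℝ, MomFeasible μ σ P ∧ SuppAtMost 3 P ∧
      z = ν * ∫ x, Hfun a h x ∂P})
    (hcons : ∃ P : Measure ℝ, MomFeasible μ σ P ∧ SuppAtMost 3 P) :
    (∃ P : Measure ℝ, MomFeasible μ σ P ∧ SuppAtMost 3 P ∧
      ν * ∫ x, Hfun a h x ∂P = Zstar) ∨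
    (∃ x₁ x₂ x₃ p₁ p₂ p₃ : ℕ → ℝ,
      (∀ k, 0 ≤ x₁ k ∧ 0 ≤ x₂ k ∧ 0 ≤ x₃ k ∧ 0 ≤ p₁ k ∧ 0 ≤ p₂ k ∧ 0 ≤ p₃ k ∧
        p₁ k + p₂ k + p₃ k = 1 ∧
        MomFeasible μ σ (threePoint (x₁ k) (x₂ k) (x₃ k) (p₁ k) (p₂ k) (p₃ k))) ∧
      Tendsto (fun k =>
          ν * ∫ x, Hfun a h x ∂(threePoint (x₁ k) (x₂ k) (x₃ k) (p₁ k) (p₂ k) (p₃ k)))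
        atTop (𝓝 Zstar) ∧
      ((∃ x₁s x₂s p₁s p₂s : ℝ, 0 ≤ x₁s ∧ 0 ≤ x₂s ∧ 0 ≤ p₁s ∧ 0 ≤ p₂s ∧ p₁s + p₂s = 1 ∧
          Tendsto x₁ atTop (𝓝 x₁s) ∧ Tendsto x₂ atTop (𝓝 x₂s) ∧ Tendsto x₃ atTop atTop ∧
          Tendsto p₁ atTop (𝓝 p₁s) ∧ Tendsto p₂ atTop (𝓝 p₂s) ∧
          Tendsto p₃ atTop (𝓝 0)) ∨
        (∃ x₁s : ℝ, 0 ≤ x₁s ∧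
          Tendsto x₁ atTop (𝓝 x₁s) ∧ Tendsto x₂ atTop atTop ∧ Tendsto x₃ atTop atTop ∧
          Tendsto p₁ atTop (𝓝 1) ∧ Tendsto p₂ atTop (𝓝 0) ∧
          Tendsto p₃ atTop (𝓝 0)))) := by
  obtain ⟨M, hM⟩ := hbd
  set S := {z : ℝ | ∃ P : Measure ℝ, MomFeasible μ σ P ∧ SuppAtMost 3 P ∧
      z = ν * ∫ x, Hfun a h x ∂P} with hSdef
  have hrep : ∀ z ∈ S, ∃ x₁ x₂ x₃ p₁ p₂ p₃ : ℝ,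
      (0 ≤ x₁ ∧ 0 ≤ x₂ ∧ 0 ≤ x₃ ∧ 0 ≤ p₁ ∧ 0 ≤ p₂ ∧ 0 ≤ p₃ ∧ p₁ + p₂ + p₃ = 1 ∧
        MomFeasible μ σ (threePoint x₁ x₂ x₃ p₁ p₂ p₃)) ∧
      z = ν * (p₁ * Hfun a h x₁ + p₂ * Hfun a h x₂ + p₃ * Hfun a h x₃) := by
    rintro z ⟨P, hPf, hPs, rfl⟩
    obtain ⟨x₁, x₂, x₃, p₁, p₂, p₃, hx₁, hx₂, hx₃, hp₁, hp₂, hp₃, hsum, hPeq⟩ :=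
      exists_threePoint_rep hPf.1 hPf.2.1 hPs
    refine ⟨x₁, x₂, x₃, p₁, p₂, p₃, ⟨hx₁, hx₂, hx₃, hp₁, hp₂, hp₃, hsum, hPeq ▸ hPf⟩, ?_⟩
    rw [hPeq, integral_threePoint (Hfun a h) hp₁ hp₂ hp₃]
  have hSne : S.Nonempty := by
    obtain ⟨P, h1, h2⟩ := hcons
    exact ⟨ν * ∫ x, Hfun a h x ∂P, P, h1, h2, rfl⟩
  have hbddS : BddAbove S := by
    refine ⟨ν * (M * σ), fun z hz => ?_⟩
    obtain ⟨x₁, x₂, x₃, p₁, p₂, p₃,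
      ⟨hx₁, hx₂, hx₃, hp₁, hp₂, hp₃, hsum, hfeas⟩, hzeq⟩ := hrep z hz
    have hσ' : p₁ * x₁ ^ 2 + p₂ * x₂ ^ 2 + p₃ * x₃ ^ 2 = σ := by
      have := hfeas.2.2.2.2.2
      rwa [integral_threePoint (fun x => x ^ 2) hp₁ hp₂ hp₃] at this
    have hb : p₁ * Hfun a h x₁ + p₂ * Hfun a h x₂ + p₃ * Hfun a h x₃ ≤ M * σ := by
      have b₁ := (abs_le.mp (Hfun_bound (a := a) hmeas hM x₁)).2
      have b₂ := (abs_le.mp (Hfun_bound (a := a) hmeas hM x₂)).2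
      have b₃ := (abs_le.mp (Hfun_bound (a := a) hmeas hM x₃)).2
      have c₁ := mul_le_mul_of_nonneg_left b₁ hp₁
      have c₂ := mul_le_mul_of_nonneg_left b₂ hp₂
      have c₃ := mul_le_mul_of_nonneg_left b₃ hp₃
      have : p₁ * (M * x₁ ^ 2) + p₂ * (M * x₂ ^ 2) + p₃ * (M * x₃ ^ 2) = M * σ := by
        rw [← hσ']; ring
      linarith
    rw [hzeq]
    exact mul_le_mul_of_nonneg_left hb hν.le
  obtain ⟨z, -, hztend, hzmem⟩ := exists_seq_tendsto_sSup hSne hbddS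
  rw [← hZ] at hztend
  choose x₁ x₂ x₃ p₁ p₂ p₃ hPk hzk using fun k => hrep (z k) (hzmem k)
  obtain ⟨φa, hma, hd₁⟩ := exists_subseq_dichotomy x₁ (fun k => (hPk k).1)
  obtain ⟨φb, hmb, hd₂⟩ := exists_subseq_dichotomy (fun k => x₂ (φa k))
    (fun k => (hPk _).2.1)
  obtain ⟨φc, hmc, hd₃⟩ := exists_subseq_dichotomy (fun k => x₃ (φa (φb k)))
    (fun k => (hPk _).2.2.1)
  obtain ⟨φd, hmd, hd₄⟩ := exists_subseq_dichotomy (fun k => p₁ (φa (φb (φc k))))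
    (fun k => (hPk _).2.2.2.1)
  obtain ⟨φe, hme, hd₅⟩ := exists_subseq_dichotomy (fun k => p₂ (φa (φb (φc (φd k)))))
    (fun k => (hPk _).2.2.2.2.1)
  obtain ⟨φf, hmf, hd₆⟩ := exists_subseq_dichotomy
    (fun k => p₃ (φa (φb (φc (φd (φe k)))))) (fun k => (hPk _).2.2.2.2.2.1)
  set ψ : ℕ → ℕ := fun k => φa (φb (φc (φd (φe (φf k))))) with hψ
  have tf : Tendsto φf atTop atTop := hmf.tendsto_atTop
  have te : Tendsto (fun k => φe (φf k)) atTop atTop := hme.tendsto_atTop.comp tf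
  have td : Tendsto (fun k => φd (φe (φf k))) atTop atTop := hmd.tendsto_atTop.comp te
  have tc : Tendsto (fun k => φc (φd (φe (φf k)))) atTop atTop := hmc.tendsto_atTop.comp td
  have tb : Tendsto (fun k => φb (φc (φd (φe (φf k))))) atTop atTop :=
    hmb.tendsto_atTop.comp tc
  have tψ : Tendsto ψ atTop atTop := hma.tendsto_atTop.comp tb
  set X₁ : ℕ → ℝ := fun k => x₁ (ψ k) with hX₁
  set X₂ : ℕ → ℝ := fun k => x₂ (ψ k) with hX₂
  set X₃ : ℕ → ℝ := fun k => x₃ (ψ k) with hX₃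
  set P₁ : ℕ → ℝ := fun k => p₁ (ψ k) with hP₁
  set P₂ : ℕ → ℝ := fun k => p₂ (ψ k) with hP₂
  set P₃ : ℕ → ℝ := fun k => p₃ (ψ k) with hP₃
  have trans : ∀ (u : ℕ → ℝ) (χ : ℕ → ℕ), Tendsto χ atTop atTop →
      ((∃ l, 0 ≤ l ∧ Tendsto u atTop (𝓝 l)) ∨ Tendsto u atTop atTop) →
      ((∃ l, 0 ≤ l ∧ Tendsto (fun k => u (χ k)) atTop (𝓝 l)) ∨
        Tendsto (fun k => u (χ k)) atTop atTop) := by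
    rintro u χ hχ (⟨l, hl, ht⟩ | ht)
    · exact Or.inl ⟨l, hl, ht.comp hχ⟩
    · exact Or.inr (ht.comp hχ)
  have D₁ : (∃ l, 0 ≤ l ∧ Tendsto X₁ atTop (𝓝 l)) ∨ Tendsto X₁ atTop atTop :=
    trans (fun k => x₁ (φa k)) (fun k => φb (φc (φd (φe (φf k))))) tb hd₁
  have D₂ : (∃ l, 0 ≤ l ∧ Tendsto X₂ atTop (𝓝 l)) ∨ Tendsto X₂ atTop atTop :=
    trans (fun k => x₂ (φa (φb k))) (fun k => φc (φd (φe (φf k)))) tc hd₂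
  have D₃ : (∃ l, 0 ≤ l ∧ Tendsto X₃ atTop (𝓝 l)) ∨ Tendsto X₃ atTop atTop :=
    trans (fun k => x₃ (φa (φb (φc k)))) (fun k => φd (φe (φf k))) td hd₃
  have D₄ : (∃ l, 0 ≤ l ∧ Tendsto P₁ atTop (𝓝 l)) ∨ Tendsto P₁ atTop atTop :=
    trans (fun k => p₁ (φa (φb (φc (φd k))))) (fun k => φe (φf k)) te hd₄
  have D₅ : (∃ l, 0 ≤ l ∧ Tendsto P₂ atTop (𝓝 l)) ∨ Tendsto P₂ atTop atTop :=
    trans (fun k => p₂ (φa (φb (φc (φd (φe k)))))) φf tf hd₅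
  have D₆ : (∃ l, 0 ≤ l ∧ Tendsto P₃ atTop (𝓝 l)) ∨ Tendsto P₃ atTop atTop := hd₆
  have hpackψ : Pack μ σ X₁ X₂ X₃ P₁ P₂ P₃ := fun k => hPk (ψ k)
  have hobjψ : Tendsto (fun k => ν * (P₁ k * Hfun a h (X₁ k) + P₂ k * Hfun a h (X₂ k) +
      P₃ k * Hfun a h (X₃ k))) atTop (𝓝 Zstar) := by
    refine Tendsto.congr (fun k => hzk (ψ k)) (hztend.comp tψ)
  have getlim : ∀ (p : ℕ → ℝ), (∀ k, p k ≤ 1) →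
      ((∃ l, 0 ≤ l ∧ Tendsto p atTop (𝓝 l)) ∨ Tendsto p atTop atTop) →
      ∃ l, 0 ≤ l ∧ Tendsto p atTop (𝓝 l) := by
    rintro p hple (hgood | hbad)
    · exact hgood
    · exfalso
      obtain ⟨k, hk⟩ := (hbad.eventually_gt_atTop 1).exists
      exact absurd (hple k) (not_le.mpr hk)
  obtain ⟨q₁, hq₁, Tp₁⟩ := getlim P₁ (fun k => by
    obtain ⟨-, -, -, h4, h5, h6, h7, -⟩ := hpackψ k; linarith) D₄
  obtain ⟨q₂, hq₂, Tp₂⟩ := getlim P₂ (fun k => by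
    obtain ⟨-, -, -, h4, h5, h6, h7, -⟩ := hpackψ k; linarith) D₅
  obtain ⟨q₃, hq₃, Tp₃⟩ := getlim P₃ (fun k => by
    obtain ⟨-, -, -, h4, h5, h6, h7, -⟩ := hpackψ k; linarith) D₆
  rcases D₁ with ⟨l₁, hl₁, T₁⟩ | T₁
  · rcases D₂ with ⟨l₂, hl₂, T₂⟩ | T₂
    · rcases D₃ with ⟨l₃, hl₃, T₃⟩ | T₃
      · exact Or.inl (attained_helper hmeas hM hpackψ hobjψ hl₁ hl₂ hl₃ hq₁ hq₂ hq₃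
          T₁ T₂ T₃ Tp₁ Tp₂ Tp₃)
      · exact Or.inr (branch1_helper hpackψ hobjψ hl₁ hl₂ hq₁ hq₂ T₁ T₂ T₃ Tp₁ Tp₂)
    · rcases D₃ with ⟨l₃, hl₃, T₃⟩ | T₃
      · exact Or.inr (branch1_helper hpackψ.swap23
          (hobjψ.congr fun k => by ring) hl₁ hl₃ hq₁ hq₃ T₁ T₃ T₂ Tp₁ Tp₃)
      · exact Or.inr (branch2_helper hpackψ hobjψ hl₁ T₁ T₂ T₃)
  · rcases D₂ with ⟨l₂, hl₂, T₂⟩ | T₂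
    · rcases D₃ with ⟨l₃, hl₃, T₃⟩ | T₃
      · exact Or.inr (branch1_helper hpackψ.rot
          (hobjψ.congr fun k => by ring) hl₂ hl₃ hq₂ hq₃ T₂ T₃ T₁ Tp₂ Tp₃)
      · exact Or.inr (branch2_helper hpackψ.swap12
          (hobjψ.congr fun k => by ring) hl₂ T₂ T₁ T₃)
    · rcases D₃ with ⟨l₃, hl₃, T₃⟩ | T₃
      · exact Or.inr (branch2_helper hpackψ.rot.rot
          (hobjψ.congr fun k => by ring) hl₃ T₃ T₁ T₂)
      · exfalso
        have hz₃ : Tendsto P₃ atTop (𝓝 0) := hpackψ.p3_zero T₃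
        have hz₂ : Tendsto P₂ atTop (𝓝 0) := hpackψ.swap23.p3_zero T₂
        have hz₁ : Tendsto P₁ atTop (𝓝 0) := hpackψ.rot.p3_zero T₁
        have h1 : Tendsto (fun k => P₁ k + P₂ k + P₃ k) atTop (𝓝 (0 + 0 + 0)) :=
          (hz₁.add hz₂).add hz₃
        have h2 : Tendsto (fun k => P₁ k + P₂ k + P₃ k) atTop (𝓝 1) :=
          Tendsto.congr (fun k => ((hpackψ k).2.2.2.2.2.2.1).symm) tendsto_const_nhds
        have := tendsto_nhds_unique h1 h2
        norm_num at this
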